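/- arXiv:2208.14424 — 2 statements merged into one kernel-verified Lean document; each statement's English description precedes it below -/
import Mathlib

section
/- Let ρ_{XY} be a state on ℂ^m ⊗ ℂ^n and σ_{XY'} a state on ℂ^m ⊗ ℂ^{n'}, both diagonal in the standard product basis (classical states). Then ρ_{XY} ≻_X σ_{XY'} (quantum conditional majorization with respect to the first system) holds if and only if there exists a conditionally doubly stochastic channel 𝒩 = ∑_{j=1}^k 𝒟^{(j)} ⊗ ℱ^{(j)} such that σ_{XY'} = 𝒩(ρ_{XY}), where each 𝒟^{(j)} is the quantum channel on m×m matrices induced by a doubly stochastic matrix D^{(j)} via 𝒟^{(j)}(ρ) := ∑_{x,x'} D^{(j)}_{x'x} ρ_{xx} E_{x'x'}, and each ℱ^{(j)} is a completely positive map from n×n to n'×n' matrices with ∑_{j=1}^k ℱ^{(j)} trace-preserving. -/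
open Matrix Kronecker BigOperators
open scoped ENNReal ComplexOrder

noncomputable section

/-- A quantum state: a positive semidefinite matrix of trace one. -/
def IsState {α : Type} [Fintype α] (ρ : Matrix α α ℂ) : Prop :=
  ρ.PosSemidef ∧ ρ.trace = 1

/-- The Choi matrix `∑ i j, E i j ⊗ N (E i j)` of a map between matrix algebras. -/
def choiMatrix {α β : Type} [Fintype α] [DecidableEq α] [Fintype β]
    (N : Matrix α α ℂ → Matrix β β ℂ) : Matrix (α × β) (α × β) ℂ :=
  ∑ i : α, ∑ j : α, Matrix.single i j (1 : ℂ) ⊗ₖ N (Matrix.single i j 1)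

/-- A quantum channel: a linear, trace-preserving and completely positive map. -/
def IsChannel {α β : Type} [Fintype α] [DecidableEq α] [Fintype β]
    (N : Matrix α α ℂ → Matrix β β ℂ) : Prop :=
  IsLinearMap ℂ N ∧ (∀ X, (N X).trace = X.trace) ∧ (choiMatrix N).PosSemidef

/-- Partial trace over the first tensor factor. -/
def trA {α β : Type} [Fintype α] (ρ : Matrix (α × β) (α × β) ℂ) : Matrix β β ℂ :=
  Matrix.of fun j j' => ∑ i : α, ρ (i, j) (i, j')

/-- The uniform (maximally mixed) state of dimension `n`. -/
def unif (n : ℕ) : Matrix (Fin n) (Fin n) ℂ := (n : ℂ)⁻¹ • 1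

/-- The tensor extension `M ⊗ id` of a map `M` acting on the first factor. -/
def tensorIdRight {a a' : ℕ} (b : ℕ)
    (M : Matrix (Fin a) (Fin a) ℂ → Matrix (Fin a') (Fin a') ℂ)
    (X : Matrix (Fin a × Fin b) (Fin a × Fin b) ℂ) :
    Matrix (Fin a' × Fin b) (Fin a' × Fin b) ℂ :=
  Matrix.of fun p q => M (Matrix.of fun k k' => X (k, p.2) (k', q.2)) p.1 q.1

/-- A conditionally unital bipartite channel: it sends every state of the form
`u_A ⊗ ρ_B` to a state of the form `u_C ⊗ σ_{B'}`. -/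
def CondUnital {a b c b' : ℕ}
    (N : Matrix (Fin a × Fin b) (Fin a × Fin b) ℂ → Matrix (Fin c × Fin b') (Fin c × Fin b') ℂ) :
    Prop :=
  ∀ ρB : Matrix (Fin b) (Fin b) ℂ, IsState ρB →
    ∃ σ : Matrix (Fin b') (Fin b') ℂ, IsState σ ∧ N (unif a ⊗ₖ ρB) = unif c ⊗ₖ σ

/-- An `A ↛ B'` semi-causal bipartite channel. -/
def SemiCausal {a b c b' : ℕ}
    (N : Matrix (Fin a × Fin b) (Fin a × Fin b) ℂ → Matrix (Fin c × Fin b') (Fin c × Fin b') ℂ) :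
    Prop :=
  ∀ M : Matrix (Fin a) (Fin a) ℂ → Matrix (Fin a) (Fin a) ℂ, IsChannel M →
    ∀ X : Matrix (Fin a × Fin b) (Fin a × Fin b) ℂ,
      trA (N (tensorIdRight b M X)) = trA (N X)

/-- A locally balanced channel: a quantum channel that is both conditionally unital
and `A ↛ B'` semi-causal. -/
def LocallyBalanced {a b c b' : ℕ}
    (N : Matrix (Fin a × Fin b) (Fin a × Fin b) ℂ → Matrix (Fin c × Fin b') (Fin c × Fin b') ℂ) :
    Prop :=
  IsChannel N ∧ CondUnital N ∧ SemiCausal N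

/-- Conditional majorization `ρ ≻_A σ` with respect to the first system. -/
def CondMaj {a b a' b' : ℕ}
    (ρ : Matrix (Fin a × Fin b) (Fin a × Fin b) ℂ)
    (σ : Matrix (Fin a' × Fin b') (Fin a' × Fin b') ℂ) : Prop :=
  (a' ≥ a ∧ ∃ (V : Matrix (Fin a') (Fin a) ℂ)
      (N : Matrix (Fin a × Fin b) (Fin a × Fin b) ℂ →
           Matrix (Fin a × Fin b') (Fin a × Fin b') ℂ),
      Vᴴ * V = 1 ∧ LocallyBalanced N ∧
      σ = (V ⊗ₖ (1 : Matrix (Fin b') (Fin b') ℂ)) * N ρ *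
            (V ⊗ₖ (1 : Matrix (Fin b') (Fin b') ℂ))ᴴ) ∨
  (a ≥ a' ∧ ∃ (U : Matrix (Fin a) (Fin a') ℂ)
      (N : Matrix (Fin a × Fin b) (Fin a × Fin b) ℂ →
           Matrix (Fin a × Fin b') (Fin a × Fin b') ℂ),
      Uᴴ * U = 1 ∧ LocallyBalanced N ∧
      (U ⊗ₖ (1 : Matrix (Fin b') (Fin b') ℂ)) * σ *
          (U ⊗ₖ (1 : Matrix (Fin b') (Fin b') ℂ))ᴴ = N ρ)

/-- Relaxed conditional majorization `ρ ≻^A σ`: as `CondMaj`, with the locally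
balanced channel replaced by a mere conditionally unital channel. -/
def RelCondMaj {a b a' b' : ℕ}
    (ρ : Matrix (Fin a × Fin b) (Fin a × Fin b) ℂ)
    (σ : Matrix (Fin a' × Fin b') (Fin a' × Fin b') ℂ) : Prop :=
  (a' ≥ a ∧ ∃ (V : Matrix (Fin a') (Fin a) ℂ)
      (N : Matrix (Fin a × Fin b) (Fin a × Fin b) ℂ →
           Matrix (Fin a × Fin b') (Fin a × Fin b') ℂ),
      Vᴴ * V = 1 ∧ (IsChannel N ∧ CondUnital N) ∧
      σ = (V ⊗ₖ (1 : Matrix (Fin b') (Fin b') ℂ)) * N ρ *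
            (V ⊗ₖ (1 : Matrix (Fin b') (Fin b') ℂ))ᴴ) ∨
  (a ≥ a' ∧ ∃ (U : Matrix (Fin a) (Fin a') ℂ)
      (N : Matrix (Fin a × Fin b) (Fin a × Fin b) ℂ →
           Matrix (Fin a × Fin b') (Fin a × Fin b') ℂ),
      Uᴴ * U = 1 ∧ (IsChannel N ∧ CondUnital N) ∧
      (U ⊗ₖ (1 : Matrix (Fin b') (Fin b') ℂ)) * σ *
          (U ⊗ₖ (1 : Matrix (Fin b') (Fin b') ℂ))ᴴ = N ρ)

/-- Reordering `(A × B) × (A' × B') ≃ AA' × BB'`. -/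
def sysEquiv (a b a' b' : ℕ) :
    (Fin a × Fin b) × (Fin a' × Fin b') ≃ Fin (a * a') × Fin (b * b') :=
  (Equiv.prodProdProdComm (Fin a) (Fin b) (Fin a') (Fin b')).trans
    (finProdFinEquiv.prodCongr finProdFinEquiv)

/-- The tensor product `ρ_{AB} ⊗ σ_{A'B'}` regarded as a bipartite state with
first system `AA'` and second system `BB'`. -/
def tensorState {a b a' b' : ℕ}
    (ρ : Matrix (Fin a × Fin b) (Fin a × Fin b) ℂ)
    (σ : Matrix (Fin a' × Fin b') (Fin a' × Fin b') ℂ) :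
    Matrix (Fin (a * a') × Fin (b * b')) (Fin (a * a') × Fin (b * b')) ℂ :=
  Matrix.reindex (sysEquiv a b a' b') (sysEquiv a b a' b') (ρ ⊗ₖ σ)

/-- Reindexing of a matrix on a product of `Fin` types as a matrix on a single `Fin` type. -/
def mreindex {a b : ℕ} (ρ : Matrix (Fin a × Fin b) (Fin a × Fin b) ℂ) :
    Matrix (Fin (a * b)) (Fin (a * b)) ℂ :=
  Matrix.reindex finProdFinEquiv finProdFinEquiv ρ

/-- Majorization `ρ ≻ σ` between states of possibly different dimensions. -/
def Maj {n n' : ℕ} (ρ : Matrix (Fin n) (Fin n) ℂ) (σ : Matrix (Fin n') (Fin n') ℂ) : Prop :=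
  (n' ≥ n ∧ ∃ (V : Matrix (Fin n') (Fin n) ℂ)
      (N : Matrix (Fin n) (Fin n) ℂ → Matrix (Fin n) (Fin n) ℂ),
      Vᴴ * V = 1 ∧ IsChannel N ∧ N 1 = 1 ∧ σ = V * N ρ * Vᴴ) ∨
  (n ≥ n' ∧ ∃ (U : Matrix (Fin n) (Fin n') ℂ)
      (N : Matrix (Fin n) (Fin n) ℂ → Matrix (Fin n) (Fin n) ℂ),
      Uᴴ * U = 1 ∧ IsChannel N ∧ N 1 = 1 ∧ U * σ * Uᴴ = N ρ)

/-- The conditional min-entropy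
`H_min(A|B)_ρ = - log₂ min {λ ≥ 0 : λ I_A ⊗ ρ_B - ρ_{AB} ≽ 0}`. -/
def condMinEntropy {a b : ℕ} (ρ : Matrix (Fin a × Fin b) (Fin a × Fin b) ℂ) : ℝ :=
  - Real.logb 2 (sInf {l : ℝ | 0 ≤ l ∧
      (l • ((1 : Matrix (Fin a) (Fin a) ℂ) ⊗ₖ trA ρ) - ρ).PosSemidef})

/-- The conditional min-entropy `H_min^↑(A|B)_ρ`, optimized over states `σ_B`. -/
def condMinEntropyUp {a b : ℕ} (ρ : Matrix (Fin a × Fin b) (Fin a × Fin b) ℂ) : ℝ :=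
  sSup {r : ℝ | ∃ σ : Matrix (Fin b) (Fin b) ℂ, IsState σ ∧
    (∃ l : ℝ, 0 ≤ l ∧ (l • ((1 : Matrix (Fin a) (Fin a) ℂ) ⊗ₖ σ) - ρ).PosSemidef) ∧
    r = - Real.logb 2 (sInf {l : ℝ | 0 ≤ l ∧
      (l • ((1 : Matrix (Fin a) (Fin a) ℂ) ⊗ₖ σ) - ρ).PosSemidef})}

/-- The maximally entangled state of rank `k` on `ℂ^k ⊗ ℂ^k`. -/
def maxEnt (k : ℕ) : Matrix (Fin k × Fin k) (Fin k × Fin k) ℂ :=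
  Matrix.of fun p q => if p.1 = p.2 ∧ q.1 = q.2 then (k : ℂ)⁻¹ else 0

/-- The quantum channel on `m × m` matrices induced by a doubly stochastic matrix `D`,
`ρ ↦ ∑ x x', D x' x * ρ x x • E x' x'`. -/
def dsChannel {m : ℕ} (D : Matrix (Fin m) (Fin m) ℝ) :
    Matrix (Fin m) (Fin m) ℂ → Matrix (Fin m) (Fin m) ℂ :=
  fun ρ => ∑ x : Fin m, ∑ x' : Fin m,
    (((D x' x : ℝ) : ℂ) * ρ x x) • Matrix.single x' x' (1 : ℂ)

/-- A doubly stochastic matrix: nonnegative entries, all row and column sums equal one. -/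
def IsDoublyStochastic {m : ℕ} (D : Matrix (Fin m) (Fin m) ℝ) : Prop :=
  (∀ x x', 0 ≤ D x x') ∧ (∀ x, ∑ x', D x x' = 1) ∧ (∀ x', ∑ x, D x x' = 1)

/-- The tensor product `M ⊗ F` of two (linear) maps between matrix algebras. -/
def tensorMap {m m' n n' : ℕ}
    (M : Matrix (Fin m) (Fin m) ℂ → Matrix (Fin m') (Fin m') ℂ)
    (F : Matrix (Fin n) (Fin n) ℂ → Matrix (Fin n') (Fin n') ℂ) :
    Matrix (Fin m × Fin n) (Fin m × Fin n) ℂ →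
      Matrix (Fin m' × Fin n') (Fin m' × Fin n') ℂ :=
  fun X => ∑ k : Fin m, ∑ k' : Fin m, ∑ l : Fin n, ∑ l' : Fin n,
    X (k, l) (k', l') •
      (M (Matrix.single k k' 1) ⊗ₖ F (Matrix.single l l' 1))

/-- A conditional entropy: a real-valued function on all bipartite states of all finite
dimensions that is not identically zero, reverses conditional majorization, and is
additive on tensor products. -/
structure CondEntropy where
  H : ∀ (a b : ℕ), Matrix (Fin a × Fin b) (Fin a × Fin b) ℂ → ℝ
  nontrivial : ∃ (a b : ℕ) (ρ : Matrix (Fin a × Fin b) (Fin a × Fin b) ℂ),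
    IsState ρ ∧ H a b ρ ≠ 0
  mono : ∀ (a b a' b' : ℕ) (ρ : Matrix (Fin a × Fin b) (Fin a × Fin b) ℂ)
    (σ : Matrix (Fin a' × Fin b') (Fin a' × Fin b') ℂ),
    IsState ρ → IsState σ → CondMaj ρ σ → H a b ρ ≤ H a' b' σ
  additive : ∀ (a b a' b' : ℕ) (ρ : Matrix (Fin a × Fin b) (Fin a × Fin b) ℂ)
    (σ : Matrix (Fin a' × Fin b') (Fin a' × Fin b') ℂ),
    IsState ρ → IsState σ →
    H (a * a') (b * b') (tensorState ρ σ) = H a b ρ + H a' b' σ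

/-- A conditional entropy is normalized if `H(A|B) = 1` on `u⁽²⁾ ⊗ ρ_B`. -/
def CondEntropy.Normalized (E : CondEntropy) : Prop :=
  ∀ (b : ℕ) (ρB : Matrix (Fin b) (Fin b) ℂ), IsState ρB →
    E.H 2 b (unif 2 ⊗ₖ ρB) = 1

/-- A relaxed conditional entropy: as `CondEntropy`, but monotone under the relaxed
conditional majorization. -/
structure RelCondEntropy where
  H : ∀ (a b : ℕ), Matrix (Fin a × Fin b) (Fin a × Fin b) ℂ → ℝ
  nontrivial : ∃ (a b : ℕ) (ρ : Matrix (Fin a × Fin b) (Fin a × Fin b) ℂ),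
    IsState ρ ∧ H a b ρ ≠ 0
  mono : ∀ (a b a' b' : ℕ) (ρ : Matrix (Fin a × Fin b) (Fin a × Fin b) ℂ)
    (σ : Matrix (Fin a' × Fin b') (Fin a' × Fin b') ℂ),
    IsState ρ → IsState σ → RelCondMaj ρ σ → H a b ρ ≤ H a' b' σ
  additive : ∀ (a b a' b' : ℕ) (ρ : Matrix (Fin a × Fin b) (Fin a × Fin b) ℂ)
    (σ : Matrix (Fin a' × Fin b') (Fin a' × Fin b') ℂ),
    IsState ρ → IsState σ →
    H (a * a') (b * b') (tensorState ρ σ) = H a b ρ + H a' b' σ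

/-- A relaxed conditional entropy is normalized if `H(A|B) = 1` on `u⁽²⁾ ⊗ ρ_B`. -/
def RelCondEntropy.Normalized (E : RelCondEntropy) : Prop :=
  ∀ (b : ℕ) (ρB : Matrix (Fin b) (Fin b) ℂ), IsState ρB →
    E.H 2 b (unif 2 ⊗ₖ ρB) = 1

/-- An entropy: a real-valued function on all states of all finite dimensions that is
not identically zero, reverses majorization, and is additive on tensor products. -/
structure Entropy where
  H : ∀ (n : ℕ), Matrix (Fin n) (Fin n) ℂ → ℝ
  nontrivial : ∃ (n : ℕ) (ρ : Matrix (Fin n) (Fin n) ℂ), IsState ρ ∧ H n ρ ≠ 0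
  mono : ∀ (n n' : ℕ) (ρ : Matrix (Fin n) (Fin n) ℂ) (σ : Matrix (Fin n') (Fin n') ℂ),
    IsState ρ → IsState σ → Maj ρ σ → H n ρ ≤ H n' σ
  additive : ∀ (n n' : ℕ) (ρ : Matrix (Fin n) (Fin n) ℂ) (σ : Matrix (Fin n') (Fin n') ℂ),
    IsState ρ → IsState σ → H (n * n') (mreindex (ρ ⊗ₖ σ)) = H n ρ + H n' σ

/-- A relative entropy: an `[0,∞]`-valued function on pairs of states of equal dimension
that is not identically zero, monotone under quantum channels, and additive on
tensor products. -/
structure RelEntropy where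
  D : ∀ (n : ℕ), Matrix (Fin n) (Fin n) ℂ → Matrix (Fin n) (Fin n) ℂ → ℝ≥0∞
  nontrivial : ∃ (n : ℕ) (ρ σ : Matrix (Fin n) (Fin n) ℂ),
    IsState ρ ∧ IsState σ ∧ D n ρ σ ≠ 0
  mono : ∀ (n m : ℕ) (N : Matrix (Fin n) (Fin n) ℂ → Matrix (Fin m) (Fin m) ℂ),
    IsChannel N → ∀ ρ σ : Matrix (Fin n) (Fin n) ℂ,
      IsState ρ → IsState σ → D m (N ρ) (N σ) ≤ D n ρ σ
  additive : ∀ (n m : ℕ) (ρ σ : Matrix (Fin n) (Fin n) ℂ) (ω τ : Matrix (Fin m) (Fin m) ℂ),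
    IsState ρ → IsState σ → IsState ω → IsState τ →
    D (n * m) (mreindex (ρ ⊗ₖ ω)) (mreindex (σ ⊗ₖ τ)) = D n ρ σ + D m ω τ


/-- The conditional entropy `log₂|A| − 𝐃(ρ_{AB} ‖ u_A ⊗ ρ_B)` induced by a relative
entropy `𝐃`, valued in the extended reals. -/
def RelEntropy.condH (Dd : RelEntropy) (a b : ℕ)
    (ρ : Matrix (Fin a × Fin b) (Fin a × Fin b) ℂ) : EReal :=
  ((Real.logb 2 a : ℝ) : EReal) -
    ((Dd.D (a * b) (mreindex ρ) (mreindex (unif a ⊗ₖ trA ρ)) : ℝ≥0∞) : EReal)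

/-!
Forward direction: since the two first systems have the same dimension, the isometry in `CondMaj`
is unitary, so `σ = G ρ` for the conjugate `G = (W ⊗ 1) N (·) (W ⊗ 1)†` of a locally balanced `N`,
and `G` is again conditionally unital and semi-causal. On classical states `G` acts through the
transition probabilities `P(x'y'|xy) = ⟨x'y'|G(|xy⟩⟨xy|)|x'y'⟩`. Conditional unitality,
applied to `u ⊗ |y⟩⟨y|`, makes the row sums `∑ₓ P(x'y'|xy)` equal to `τ_y(y')` for a state `τ_y`;
semi-causality, tested against the channels that replace `A` by `|x₀⟩⟨x₀|`, makes the column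
sums `∑ₓ' P(x'y'|xy)` independent of `x`, hence also equal to `τ_y(y')`. So every block
`P(·y'|·y)` is `τ_y(y')` times a doubly stochastic matrix `D^{(y,y')}`, and
`σ = ∑_{y,y'} 𝒟^{(y,y')} ⊗ ℱ^{(y,y')}(ρ)` with `ℱ^{(y,y')}(X) = τ_y(y') ⟨y|X|y⟩ |y'⟩⟨y'|`.

Backward direction: `∑ⱼ 𝒟⁽ʲ⁾ ⊗ ℱ⁽ʲ⁾` is locally balanced, because doubly stochastic
matrices fix the maximally mixed state and tracing out `A` leaves `∑ⱼ ℱ⁽ʲ⁾ ∘ Tr_A`, on which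
no channel acting on `A` has any effect.
-/

namespace IsLinearMap

variable {R M M₂ ι : Type*} [Semiring R] [AddCommMonoid M] [AddCommMonoid M₂] [Module R M]
  [Module R M₂] {f : M → M₂}

theorem map_sum (hf : IsLinearMap R f) (s : Finset ι) (g : ι → M) :
    f (∑ i ∈ s, g i) = ∑ i ∈ s, f (g i) :=
  _root_.map_sum (mk' f hf) g s

theorem sum {g : ι → M → M₂} (s : Finset ι) (hg : ∀ i, IsLinearMap R (g i)) :
    IsLinearMap R fun x => ∑ i ∈ s, g i x :=
  ⟨fun x y => by simp only [(hg _).map_add, Finset.sum_add_distrib],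
   fun c x => by simp only [(hg _).map_smul, Finset.smul_sum]⟩

end IsLinearMap

lemma Matrix.kronecker_sum {l m n p ι : Type*} (A : Matrix l m ℂ) (s : Finset ι)
    (f : ι → Matrix n p ℂ) : A ⊗ₖ ∑ i ∈ s, f i = ∑ i ∈ s, A ⊗ₖ f i :=
  map_sum (kroneckerBilinear (R := ℂ) A) f s

lemma Matrix.sum_diagonal {α ι : Type*} [DecidableEq α] (s : Finset ι) (f : ι → α → ℂ) :
    ∑ i ∈ s, diagonal (f i) = diagonal (∑ i ∈ s, f i) :=
  (map_sum (diagonalAddMonoidHom α ℂ) f s).symm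

lemma IsLinearMap.conj {α β γ : Type} [Fintype β] {f : Matrix α α ℂ → Matrix β β ℂ}
    (hf : IsLinearMap ℂ f) (A : Matrix γ β ℂ) : IsLinearMap ℂ fun X => A * f X * Aᴴ :=
  ⟨fun X Y => by simp [hf.map_add, Matrix.mul_add, Matrix.add_mul],
   fun c X => by simp [hf.map_smul]⟩

section MatrixMaps

variable {α β : Type} [Fintype α] [DecidableEq α]

lemma IsLinearMap.eq_sum_single {N : Matrix α α ℂ → Matrix β β ℂ} (hN : IsLinearMap ℂ N)
    (X : Matrix α α ℂ) : N X = ∑ i, ∑ j, X i j • N (single i j 1) := by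
  conv_lhs => rw [matrix_eq_sum_single X]
  simp only [hN.map_sum, ← hN.map_smul, smul_single, smul_eq_mul, mul_one]

lemma isState_single (i : α) : IsState (single i i (1 : ℂ)) :=
  ⟨by simpa [← diagonal_single] using
      PosSemidef.diagonal (d := Pi.single i (1 : ℂ)) fun j => by
        rcases eq_or_ne j i with rfl | h <;> simp [*],
    by simp⟩

variable [Fintype β]

lemma choiMatrix_apply (N : Matrix α α ℂ → Matrix β β ℂ) (i j : α) (p q : β) :
    choiMatrix N (i, p) (j, q) = N (single i j 1) p q := by
  simp [choiMatrix, Matrix.sum_apply, single_apply, ite_and]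

lemma choiMatrix_sum {ι : Type*} (s : Finset ι) (N : ι → Matrix α α ℂ → Matrix β β ℂ) :
    choiMatrix (fun X => ∑ j ∈ s, N j X) = ∑ j ∈ s, choiMatrix (N j) := by
  ext ⟨i, p⟩ ⟨j, q⟩
  simp only [choiMatrix_apply, Matrix.sum_apply]

lemma isChannel_trace_smul {ω : Matrix β β ℂ} (hω : IsState ω) :
    IsChannel fun X : Matrix α α ℂ => X.trace • ω := by
  refine ⟨⟨fun X Y => by rw [trace_add, add_smul], fun c X => by rw [trace_smul, smul_assoc]⟩,
    fun X => by rw [trace_smul, hω.2, smul_eq_mul, mul_one], ?_⟩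
  have : choiMatrix (fun X : Matrix α α ℂ => X.trace • ω) = 1 ⊗ₖ ω := by
    ext ⟨i, p⟩ ⟨j, q⟩
    rcases eq_or_ne i j with rfl | h
    · simp [choiMatrix_apply]
    · simp [choiMatrix_apply, h]
  rw [this]
  exact PosSemidef.one.kronecker hω.1

variable [DecidableEq β]

lemma posSemidef_map_of_choi {N : Matrix α α ℂ → Matrix β β ℂ} (hN : IsLinearMap ℂ N)
    (hchoi : (choiMatrix N).PosSemidef) {X : Matrix α α ℂ} (hX : X.PosSemidef) :
    (N X).PosSemidef := by
  obtain ⟨B, rfl⟩ : ∃ B : Matrix α α ℂ, X = Bᴴ * B := by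
    open scoped MatrixOrder in exact CStarAlgebra.nonneg_iff_eq_star_mul_self.mp hX.nonneg
  -- `N (Bᴴ B) = ∑ₖ Aₖ C Aₖᴴ` for the Choi matrix `C` and `Aₖ = ⟨bₖ| ⊗ 1`, `bₖ` the rows of `B`
  let A : α → Matrix β (α × β) ℂ := fun k => of fun p s => if p = s.2 then star (B k s.1) else 0
  have hsum : N (Bᴴ * B) = ∑ k, A k * choiMatrix N * (A k)ᴴ := by
    ext p q
    rw [hN.eq_sum_single]
    simp only [mul_apply, conjTranspose_apply, RCLike.star_def, Matrix.sum_apply,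
      Matrix.smul_apply, smul_eq_mul, Finset.sum_mul, of_apply, ite_mul, zero_mul,
      Fintype.sum_prod_type, Finset.sum_ite_eq, Finset.mem_univ, ↓reduceIte,
      apply_ite (starRingEnd ℂ), RingHomCompTriple.comp_apply, RingHom.id_apply, map_zero, mul_ite,
      mul_zero, choiMatrix_apply, A]
    rw [Finset.sum_comm_cycle]
    refine Finset.sum_congr rfl fun k _ => ?_
    rw [Finset.sum_comm]
    simp only [mul_right_comm]
  rw [hsum]
  exact posSemidef_sum _ fun k _ => hchoi.mul_mul_conjTranspose_same (A k)

end MatrixMaps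

section PartialTrace

variable {α β : Type} [Fintype α]

lemma isLinearMap_trA : IsLinearMap ℂ (trA : Matrix (α × β) (α × β) ℂ → Matrix β β ℂ) :=
  ⟨fun X Y => by ext; simp [trA, Finset.sum_add_distrib],
   fun c X => by ext; simp [trA, Finset.mul_sum]⟩

lemma trA_kronecker (A : Matrix α α ℂ) (B : Matrix β β ℂ) : trA (A ⊗ₖ B) = A.trace • B := by
  ext; simp [trA, trace, Finset.sum_mul]

variable [Fintype β]

lemma trace_trA (Z : Matrix (α × β) (α × β) ℂ) : (trA Z).trace = Z.trace := by
  simp only [trace, trA, diag_apply, of_apply, Fintype.sum_prod_type]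
  exact Finset.sum_comm

variable [DecidableEq β]

lemma trA_kronecker_one_mul_comm (A : Matrix α α ℂ) (Z : Matrix (α × β) (α × β) ℂ) :
    trA ((A ⊗ₖ (1 : Matrix β β ℂ)) * Z) = trA (Z * (A ⊗ₖ 1)) := by
  ext r r'
  simp only [trA, mul_apply, kroneckerMap_apply, one_apply, mul_ite, mul_one, mul_zero, ite_mul,
    zero_mul, Fintype.sum_prod_type, Finset.sum_ite_eq, Finset.mem_univ, ↓reduceIte, of_apply,
    Finset.sum_ite_eq']
  rw [Finset.sum_comm]
  simp only [mul_comm]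

lemma trA_conj_kronecker_one [DecidableEq α] {W : Matrix α α ℂ} (hW : Wᴴ * W = 1)
    (Z : Matrix (α × β) (α × β) ℂ) :
    trA ((W ⊗ₖ (1 : Matrix β β ℂ)) * Z * (W ⊗ₖ 1)ᴴ) = trA Z := by
  rw [Matrix.mul_assoc, trA_kronecker_one_mul_comm, Matrix.mul_assoc, conjTranspose_kronecker,
    conjTranspose_one, ← mul_kronecker_mul, hW, one_mul, one_kronecker_one, mul_one]

end PartialTrace

section TensorIdRight

variable {a b : ℕ}

lemma trA_tensorIdRight {M : Matrix (Fin a) (Fin a) ℂ → Matrix (Fin a) (Fin a) ℂ}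
    (hM : ∀ X, (M X).trace = X.trace) (X : Matrix (Fin a × Fin b) (Fin a × Fin b) ℂ) :
    trA (tensorIdRight b M X) = trA X := by
  ext l l'
  simpa [trace, trA, tensorIdRight] using hM (of fun k k' => X (k, l) (k', l'))

lemma tensorIdRight_kronecker {M : Matrix (Fin a) (Fin a) ℂ → Matrix (Fin a) (Fin a) ℂ}
    (hM : IsLinearMap ℂ M) (A : Matrix (Fin a) (Fin a) ℂ) (B : Matrix (Fin b) (Fin b) ℂ) :
    tensorIdRight b M (A ⊗ₖ B) = M A ⊗ₖ B := by
  ext p q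
  have : (of fun k k' => (A ⊗ₖ B) (k, p.2) (k', q.2)) = B p.2 q.2 • A := by
    ext; simp [mul_comm]
  simp only [tensorIdRight, of_apply]
  rw [this, hM.map_smul]
  simp [mul_comm]

end TensorIdRight

section DsChannel

variable {m : ℕ} (D : Matrix (Fin m) (Fin m) ℝ)

lemma dsChannel_eq_diagonal (X : Matrix (Fin m) (Fin m) ℂ) :
    dsChannel D X = diagonal fun a => ∑ x, (D a x : ℂ) * X x x := by
  rw [dsChannel, Finset.sum_comm, ← sum_single_eq_diagonal]
  simp only [smul_single, smul_eq_mul, mul_one]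
  exact Finset.sum_congr rfl fun a _ => (map_sum (singleAddMonoidHom (α := ℂ) a a) _ _).symm

lemma isLinearMap_dsChannel : IsLinearMap ℂ (dsChannel D) :=
  ⟨fun X Y => by simp [dsChannel_eq_diagonal, mul_add, Finset.sum_add_distrib],
   fun c X => by simp [dsChannel_eq_diagonal, ← diagonal_smul, Finset.mul_sum, mul_left_comm]⟩

lemma choiMatrix_dsChannel :
    choiMatrix (dsChannel D) = diagonal fun s : Fin m × Fin m => (D s.2 s.1 : ℂ) := by
  ext ⟨i, p⟩ ⟨j, q⟩
  rcases eq_or_ne i j with rfl | hij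
  · simp [choiMatrix_apply, dsChannel_eq_diagonal, diagonal_apply, single_apply]
  · have : ∀ x, ¬(i = x ∧ j = x) := fun x h => hij (h.1.trans h.2.symm)
    simp [choiMatrix_apply, dsChannel_eq_diagonal, diagonal_apply, hij, this]

lemma trace_dsChannel (hcol : ∀ x, ∑ a, D a x = 1) (X : Matrix (Fin m) (Fin m) ℂ) :
    (dsChannel D X).trace = X.trace := by
  simp only [dsChannel_eq_diagonal, trace, diag_apply, diagonal_apply_eq]
  rw [Finset.sum_comm]
  simp [← Finset.sum_mul, ← Complex.ofReal_sum, hcol]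

lemma isChannel_dsChannel (hnonneg : ∀ a x, 0 ≤ D a x) (hcol : ∀ x, ∑ a, D a x = 1) :
    IsChannel (dsChannel D) :=
  ⟨isLinearMap_dsChannel D, trace_dsChannel D hcol, by
    rw [choiMatrix_dsChannel]
    exact PosSemidef.diagonal fun s => Complex.zero_le_real.mpr (hnonneg _ _)⟩

lemma dsChannel_unif (hrow : ∀ a, ∑ x, D a x = 1) : dsChannel D (unif m) = unif m := by
  ext a b
  simp [dsChannel_eq_diagonal, unif, ← Finset.sum_mul, ← Complex.ofReal_sum, hrow, diagonal_apply,
    one_apply]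

end DsChannel

section TensorMap

variable {m m' n n' : ℕ}

lemma isLinearMap_tensorMap (M : Matrix (Fin m) (Fin m) ℂ → Matrix (Fin m') (Fin m') ℂ)
    (F : Matrix (Fin n) (Fin n) ℂ → Matrix (Fin n') (Fin n') ℂ) :
    IsLinearMap ℂ (tensorMap M F) :=
  ⟨fun X Y => by simp [tensorMap, add_smul, Finset.sum_add_distrib],
   fun c X => by simp [tensorMap, smul_smul, Finset.smul_sum]⟩

lemma tensorMap_single (M : Matrix (Fin m) (Fin m) ℂ → Matrix (Fin m') (Fin m') ℂ)
    (F : Matrix (Fin n) (Fin n) ℂ → Matrix (Fin n') (Fin n') ℂ) (k k' : Fin m) (l l' : Fin n) :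
    tensorMap M F (single (k, l) (k', l') 1) = M (single k k' 1) ⊗ₖ F (single l l' 1) := by
  simp [tensorMap, single_apply, ite_and, Finset.sum_ite_eq]

lemma choiMatrix_tensorMap (M : Matrix (Fin m) (Fin m) ℂ → Matrix (Fin m') (Fin m') ℂ)
    (F : Matrix (Fin n) (Fin n) ℂ → Matrix (Fin n') (Fin n') ℂ) :
    choiMatrix (tensorMap M F) = (choiMatrix M ⊗ₖ choiMatrix F).submatrix
      (Equiv.prodProdProdComm _ _ _ _) (Equiv.prodProdProdComm _ _ _ _) := by
  ext ⟨⟨k, l⟩, p, r⟩ ⟨⟨k', l'⟩, p', r'⟩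
  simp [choiMatrix_apply, tensorMap_single]

lemma tensorMap_kronecker {M : Matrix (Fin m) (Fin m) ℂ → Matrix (Fin m') (Fin m') ℂ}
    {F : Matrix (Fin n) (Fin n) ℂ → Matrix (Fin n') (Fin n') ℂ} (hM : IsLinearMap ℂ M)
    (hF : IsLinearMap ℂ F) (A : Matrix (Fin m) (Fin m) ℂ) (B : Matrix (Fin n) (Fin n) ℂ) :
    tensorMap M F (A ⊗ₖ B) = M A ⊗ₖ F B := by
  ext ⟨a, r⟩ ⟨c, r'⟩
  rw [hM.eq_sum_single A, hF.eq_sum_single B]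
  simp only [tensorMap, kroneckerMap_apply, Matrix.sum_apply, Matrix.smul_apply, smul_eq_mul,
    Finset.sum_mul_sum, mul_mul_mul_comm]
  exact Finset.sum_congr rfl fun _ _ => Finset.sum_comm

lemma trA_tensorMap {M : Matrix (Fin m) (Fin m) ℂ → Matrix (Fin m') (Fin m') ℂ}
    {F : Matrix (Fin n) (Fin n) ℂ → Matrix (Fin n') (Fin n') ℂ}
    (hM : ∀ X, (M X).trace = X.trace) (hF : IsLinearMap ℂ F)
    (X : Matrix (Fin m × Fin n) (Fin m × Fin n) ℂ) :
    trA (tensorMap M F X) = F (trA X) := by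
  rw [hF.eq_sum_single (trA X)]
  have htr : ∀ k k' : Fin m, (single k k' (1 : ℂ)).trace = if k = k' then 1 else 0 := by
    intro k k'; split_ifs with h <;> simp [h]
  simp only [tensorMap, isLinearMap_trA.map_sum, isLinearMap_trA.map_smul, trA_kronecker, hM,
    htr, ite_smul, one_smul, zero_smul, smul_ite, smul_zero, Finset.sum_ite_irrel,
    Finset.sum_const_zero, Finset.sum_ite_eq, Finset.mem_univ, if_true]
  rw [Finset.sum_comm]
  refine Finset.sum_congr rfl fun l _ => ?_
  rw [Finset.sum_comm]
  simp only [trA, of_apply, Finset.sum_smul]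

end TensorMap

section CdsMap

variable {m n n' k : ℕ}

/-- The conditionally doubly stochastic map `∑ⱼ 𝒟⁽ʲ⁾ ⊗ ℱ⁽ʲ⁾`. -/
def cdsMap (D : Fin k → Matrix (Fin m) (Fin m) ℝ)
    (F : Fin k → Matrix (Fin n) (Fin n) ℂ → Matrix (Fin n') (Fin n') ℂ)
    (X : Matrix (Fin m × Fin n) (Fin m × Fin n) ℂ) : Matrix (Fin m × Fin n') (Fin m × Fin n') ℂ :=
  ∑ j, tensorMap (dsChannel (D j)) (F j) X

variable {D : Fin k → Matrix (Fin m) (Fin m) ℝ}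
  {F : Fin k → Matrix (Fin n) (Fin n) ℂ → Matrix (Fin n') (Fin n') ℂ}

lemma trA_cdsMap (hD : ∀ j, IsDoublyStochastic (D j)) (hF : ∀ j, IsLinearMap ℂ (F j))
    (X : Matrix (Fin m × Fin n) (Fin m × Fin n) ℂ) :
    trA (cdsMap D F X) = ∑ j, F j (trA X) := by
  simp only [cdsMap, isLinearMap_trA.map_sum,
    trA_tensorMap (trace_dsChannel _ (hD _).2.2) (hF _)]

lemma locallyBalanced_cdsMap (hD : ∀ j, IsDoublyStochastic (D j))
    (hF : ∀ j, IsLinearMap ℂ (F j)) (hFchoi : ∀ j, (choiMatrix (F j)).PosSemidef)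
    (hFtr : ∀ X, (∑ j, F j X).trace = X.trace) :
    LocallyBalanced (cdsMap D F) := by
  refine ⟨⟨IsLinearMap.sum _ fun j => isLinearMap_tensorMap _ _, fun X => ?_, ?_⟩,
    fun ρB hρB => ?_, fun M hM X => ?_⟩
  · rw [← trace_trA, trA_cdsMap hD hF, hFtr, trace_trA]
  · unfold cdsMap
    rw [choiMatrix_sum]
    refine posSemidef_sum _ fun j _ => ?_
    rw [choiMatrix_tensorMap]
    exact (((isChannel_dsChannel _ (hD j).1 (hD j).2.2).2.2).kronecker (hFchoi j)).submatrix _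
  · refine ⟨∑ j, F j ρB, ⟨posSemidef_sum _ fun j _ =>
      posSemidef_map_of_choi (hF j) (hFchoi j) hρB.1, by rw [hFtr, hρB.2]⟩, ?_⟩
    simp only [cdsMap, tensorMap_kronecker (isLinearMap_dsChannel _) (hF _),
      dsChannel_unif _ (hD _).2.1, kronecker_sum]
  · rw [trA_cdsMap hD hF, trA_cdsMap hD hF, trA_tensorIdRight hM.2.1]

lemma condMaj_cdsMap (hD : ∀ j, IsDoublyStochastic (D j))
    (hF : ∀ j, IsLinearMap ℂ (F j)) (hFchoi : ∀ j, (choiMatrix (F j)).PosSemidef)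
    (hFtr : ∀ X, (∑ j, F j X).trace = X.trace) (ρ : Matrix (Fin m × Fin n) (Fin m × Fin n) ℂ) :
    CondMaj ρ (cdsMap D F ρ) :=
  Or.inl ⟨le_rfl, 1, cdsMap D F, by simp, locallyBalanced_cdsMap hD hF hFchoi hFtr, by simp⟩

end CdsMap

section ClassicalDecomposition

variable {m n n' : ℕ}

lemma exists_isDoublyStochastic_smul {Q : Matrix (Fin m) (Fin m) ℝ} {c : ℝ}
    (hQ : ∀ a x, 0 ≤ Q a x) (hrow : ∀ a, ∑ x, Q a x = c) (hcol : ∀ x, ∑ a, Q a x = c) :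
    ∃ D : Matrix (Fin m) (Fin m) ℝ, IsDoublyStochastic D ∧ Q = c • D := by
  rcases eq_or_ne c 0 with rfl | hc
  · refine ⟨1, ⟨fun a x => ?_, fun a => by simp [one_apply], fun x => by simp [one_apply]⟩, ?_⟩
    · rcases eq_or_ne a x with rfl | h <;> simp [*]
    · ext a x
      simpa using (Finset.sum_eq_zero_iff_of_nonneg fun x _ => hQ a x).mp (hrow a) x
        (Finset.mem_univ x)
  · refine ⟨c⁻¹ • Q, ⟨fun a x => ?_, fun a => ?_, fun x => ?_⟩, by rw [smul_smul,
      mul_inv_cancel₀ hc, one_smul]⟩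
    · rw [← hrow a]
      exact mul_nonneg (inv_nonneg.mpr (Finset.sum_nonneg fun x _ => hQ a x)) (hQ a x)
    · simp [← Finset.mul_sum, hrow, hc]
    · simp [← Finset.mul_sum, hcol, hc]

def diagTransfer (t : ℝ) (y : Fin n) (y' : Fin n') (X : Matrix (Fin n) (Fin n) ℂ) :
    Matrix (Fin n') (Fin n') ℂ :=
  ((t : ℂ) * X y y) • single y' y' 1

lemma isLinearMap_diagTransfer (t : ℝ) (y : Fin n) (y' : Fin n') :
    IsLinearMap ℂ (diagTransfer t y y') :=
  ⟨fun X Y => by simp [diagTransfer, mul_add, add_smul],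
   fun c X => by simp [diagTransfer, mul_left_comm]⟩

lemma choiMatrix_diagTransfer (t : ℝ) (y : Fin n) (y' : Fin n') :
    choiMatrix (diagTransfer t y y') = (t : ℂ) • single (y, y') (y, y') 1 := by
  ext ⟨l, r⟩ ⟨l', r'⟩
  simp only [choiMatrix_apply, diagTransfer, Matrix.smul_apply, single_apply, Prod.mk.injEq,
    smul_eq_mul]
  grind

lemma trace_diagTransfer (t : ℝ) (y : Fin n) (y' : Fin n') (X : Matrix (Fin n) (Fin n) ℂ) :
    (diagTransfer t y y' X).trace = t * X y y := by
  simp [diagTransfer]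

lemma tensorMap_dsChannel_diagTransfer (D : Matrix (Fin m) (Fin m) ℝ) (t : ℝ) (y : Fin n)
    (y' : Fin n') (X : Matrix (Fin m × Fin n) (Fin m × Fin n) ℂ) :
    tensorMap (dsChannel D) (diagTransfer t y y') X =
      diagonal fun p' => if p'.2 = y' then t * ∑ x, (D p'.1 x : ℂ) * X (x, y) (x, y) else 0 := by
  ext ⟨a, r⟩ ⟨c, r'⟩
  simp only [tensorMap, dsChannel_eq_diagonal, single_apply, ite_and, mul_ite, mul_one, mul_zero,
    Finset.sum_ite_eq, Finset.mem_univ, ↓reduceIte, diagTransfer, ite_smul, smul_single,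
    smul_eq_mul, zero_smul, Matrix.sum_apply, Matrix.smul_apply, kroneckerMap_apply, diagonal_apply,
    apply_ite (fun M : Matrix (Fin n') (Fin n') ℂ => M r r'), Matrix.zero_apply, ite_mul, zero_mul,
    Finset.sum_ite_irrel, Finset.sum_ite_eq', Finset.sum_const_zero, Prod.mk.injEq]
  have : ∑ x, X (x, y) (x, y) * ((D a x : ℂ) * t) = t * ∑ x, (D a x : ℂ) * X (x, y) (x, y) := by
    rw [Finset.mul_sum]; exact Finset.sum_congr rfl fun x _ => by ring
  rw [this]
  grind

/-- `P (x', y') (x, y)` is the probability of the transition `xy ↦ x'y'`, and `s y y'` that of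
`y ↦ y'`. -/
def IsCondDoublyStochastic (P : Fin m × Fin n' → Fin m × Fin n → ℝ) : Prop :=
  (∀ p' p, 0 ≤ P p' p) ∧ ∃ s : Fin n → Fin n' → ℝ, (∀ y y', 0 ≤ s y y') ∧
    (∀ y, ∑ y', s y y' = 1) ∧
    ∀ y y', (∀ x, ∑ x', P (x', y') (x, y) = s y y') ∧ ∀ x', ∑ x, P (x', y') (x, y) = s y y'

lemma IsCondDoublyStochastic.exists_cdsMap_eq {P : Fin m × Fin n' → Fin m × Fin n → ℝ}
    (hP : IsCondDoublyStochastic P) :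
    ∃ (k : ℕ) (D : Fin k → Matrix (Fin m) (Fin m) ℝ)
      (F : Fin k → Matrix (Fin n) (Fin n) ℂ → Matrix (Fin n') (Fin n') ℂ),
      (∀ j, IsDoublyStochastic (D j)) ∧ (∀ j, IsLinearMap ℂ (F j)) ∧
      (∀ j, (choiMatrix (F j)).PosSemidef) ∧ (∀ X, (∑ j, F j X).trace = X.trace) ∧
      ∀ X, cdsMap D F X = diagonal fun p' => ∑ p, X p p * P p' p := by
  obtain ⟨hP0, s, hs0, hs1, hsums⟩ := hP
  choose D hD hPD using fun y y' => exists_isDoublyStochastic_smul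
    (Q := of fun a x => P (a, y') (x, y)) (fun a x => hP0 _ _) (hsums y y').2 (hsums y y').1
  let F (q : Fin n × Fin n') := diagTransfer (s q.1 q.2) q.1 q.2
  let e : Fin (n * n') ≃ Fin n × Fin n' := finProdFinEquiv.symm
  refine ⟨n * n', fun j => D (e j).1 (e j).2, fun j => F (e j), fun j => hD _ _,
    fun j => isLinearMap_diagTransfer _ _ _, fun j => ?_, fun X => ?_, fun X => ?_⟩
  · rw [choiMatrix_diagTransfer]
    exact (isState_single _).1.smul (Complex.zero_le_real.mpr (hs0 _ _))
  · rw [trace_sum, e.sum_comp (fun q => (F q X).trace), Fintype.sum_prod_type]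
    simp only [F, trace_diagTransfer, ← Finset.sum_mul, ← Complex.ofReal_sum, hs1]
    simp [trace]
  · rw [cdsMap, e.sum_comp (fun q => tensorMap (dsChannel (D q.1 q.2)) (F q) X)]
    simp only [F, tensorMap_dsChannel_diagTransfer]
    rw [sum_diagonal]
    congr 1
    ext ⟨a, r⟩
    have hP : ∀ y x, (P (a, r) (x, y) : ℂ) = s y r * D y r a x := fun y x => by
      exact_mod_cast congrFun (congrFun (hPD y r) a) x
    simp only [Finset.mul_sum, Finset.sum_apply, Fintype.sum_prod_type, Finset.sum_ite_eq,
      Finset.mem_univ, ↓reduceIte, hP]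
    rw [Finset.sum_comm]
    exact Finset.sum_congr rfl fun y _ => Finset.sum_congr rfl fun x _ => by ring

end ClassicalDecomposition

section Conjugation

variable {m n n' : ℕ} {W : Matrix (Fin m) (Fin m) ℂ}
  {N : Matrix (Fin m × Fin n) (Fin m × Fin n) ℂ → Matrix (Fin m × Fin n') (Fin m × Fin n') ℂ}

lemma CondMaj.exists_conj_eq {ρ : Matrix (Fin m × Fin n) (Fin m × Fin n) ℂ}
    {σ : Matrix (Fin m × Fin n') (Fin m × Fin n') ℂ} (h : CondMaj ρ σ) :
    ∃ (W : Matrix (Fin m) (Fin m) ℂ)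
      (N : Matrix (Fin m × Fin n) (Fin m × Fin n) ℂ → Matrix (Fin m × Fin n') (Fin m × Fin n') ℂ),
      Wᴴ * W = 1 ∧ LocallyBalanced N ∧ σ = (W ⊗ₖ 1) * N ρ * (W ⊗ₖ 1)ᴴ := by
  rcases h with ⟨-, V, N, hV, hN, hσ⟩ | ⟨-, U, N, hU, hN, hσ⟩
  · exact ⟨V, N, hV, hN, hσ⟩
  · -- a square isometry is unitary, so `σ` is recovered by conjugating with `Uᴴ`
    have hUK : Uᴴ ⊗ₖ (1 : Matrix (Fin n') (Fin n') ℂ) = (U ⊗ₖ 1)ᴴ := by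
      rw [conjTranspose_kronecker, conjTranspose_one]
    have hK : (U ⊗ₖ (1 : Matrix (Fin n') (Fin n') ℂ))ᴴ * (U ⊗ₖ 1) = 1 := by
      rw [← hUK, ← mul_kronecker_mul, hU, one_mul, one_kronecker_one]
    refine ⟨Uᴴ, N, by rw [conjTranspose_conjTranspose, mul_eq_one_comm.mp hU], hN, ?_⟩
    rw [← hσ, hUK, conjTranspose_conjTranspose, ← Matrix.mul_assoc, ← Matrix.mul_assoc, hK,
      Matrix.one_mul, Matrix.mul_assoc, hK, Matrix.mul_one]

lemma CondUnital.conj (hN : CondUnital N) (hW : Wᴴ * W = 1) :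
    CondUnital fun X => (W ⊗ₖ 1) * N X * (W ⊗ₖ 1)ᴴ := by
  intro ρB hρB
  obtain ⟨τ, hτ, hNτ⟩ := hN ρB hρB
  refine ⟨τ, hτ, ?_⟩
  dsimp only
  rw [hNτ, conjTranspose_kronecker, conjTranspose_one, ← mul_kronecker_mul, ← mul_kronecker_mul,
    unif, Matrix.mul_smul, Matrix.mul_one, Matrix.smul_mul, mul_eq_one_comm.mp hW, Matrix.mul_one,
    Matrix.one_mul]

lemma SemiCausal.conj (hN : SemiCausal N) (hW : Wᴴ * W = 1) :
    SemiCausal fun X => (W ⊗ₖ 1) * N X * (W ⊗ₖ 1)ᴴ := by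
  intro M hM X
  simp only [trA_conj_kronecker_one hW, hN M hM X]

end Conjugation

def classicalPart {α β : Type} [DecidableEq α] (G : Matrix α α ℂ → Matrix β β ℂ) (p' : β)
    (p : α) : ℝ :=
  (G (single p p 1) p' p').re

lemma map_eq_diagonal_classicalPart {α β : Type} [Fintype α] [DecidableEq α] [DecidableEq β]
    {G : Matrix α α ℂ → Matrix β β ℂ} (hlin : IsLinearMap ℂ G)
    (hherm : ∀ p, (G (single p p 1)).IsHermitian) {X : Matrix α α ℂ} (hX : X.IsDiag)
    (hGX : (G X).IsDiag) : G X = diagonal fun p' => ∑ p, X p p * classicalPart G p' p := by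
  rw [← hGX.diagonal_diag]
  congr 1
  ext p'
  conv_lhs => rw [diag_apply, ← hX.diagonal_diag, ← sum_single_eq_diagonal]
  rw [hlin.map_sum, Matrix.sum_apply]
  refine Finset.sum_congr rfl fun p _ => ?_
  have hre : ((G (single p p 1) p' p').re : ℂ) = G (single p p 1) p' p' :=
    (hherm p).coe_re_apply_self p'
  have hsingle : single p p (X p p) = X p p • single p p (1 : ℂ) := by
    rw [smul_single, smul_eq_mul, mul_one]
  rw [classicalPart, hre, diag_apply, hsingle, hlin.map_smul, Matrix.smul_apply, smul_eq_mul]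

section ClassicalPart

variable {m n n' : ℕ}
  {G : Matrix (Fin m × Fin n) (Fin m × Fin n) ℂ → Matrix (Fin m × Fin n') (Fin m × Fin n') ℂ}

lemma SemiCausal.sum_map_single_apply_eq (hG : SemiCausal G) (x x₀ : Fin m) (y : Fin n)
    (y' : Fin n') :
    ∑ x', G (single (x, y) (x, y) 1) (x', y') (x', y') =
      ∑ x', G (single (x₀, y) (x₀, y) 1) (x', y') (x', y') := by
  have hrepl := (isChannel_trace_smul (α := Fin m) (isState_single x₀))
  have := hG _ hrepl (single x x 1 ⊗ₖ single y y 1)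
  rw [tensorIdRight_kronecker hrepl.1, trace_single_eq_same, one_smul, single_kronecker_single,
    single_kronecker_single, mul_one] at this
  simpa [trA] using (congrFun (congrFun this y') y').symm

lemma CondUnital.exists_sum_map_single_apply (hlin : IsLinearMap ℂ G) (hG : CondUnital G)
    (y : Fin n) : ∃ τ : Matrix (Fin n') (Fin n') ℂ, IsState τ ∧
      ∀ x' y', ∑ x, G (single (x, y) (x, y) 1) (x', y') (x', y') = τ y' y' := by
  obtain ⟨τ, hτ, hGτ⟩ := hG _ (isState_single y)
  refine ⟨τ, hτ, fun x' y' => ?_⟩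
  have hu : unif m ⊗ₖ single y y (1 : ℂ) = (m : ℂ)⁻¹ • ∑ x, single (x, y) (x, y) 1 := by
    ext ⟨a, r⟩ ⟨c, r'⟩
    simp only [unif, kroneckerMap_apply, Matrix.smul_apply, one_apply, smul_eq_mul, mul_ite,
      mul_one, mul_zero, single_apply, ite_and, Matrix.sum_apply, Prod.mk.injEq,
      Finset.sum_ite_eq', Finset.mem_univ, ↓reduceIte]
    grind
  have hm : (m : ℂ)⁻¹ ≠ 0 := by simp [x'.pos.ne']
  have := congrFun (congrFun hGτ (x', y')) (x', y')
  rw [hu, hlin.map_smul, hlin.map_sum] at this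
  simpa [unif, Matrix.sum_apply, hm] using this

lemma isCondDoublyStochastic_classicalPart (hlin : IsLinearMap ℂ G)
    (hpos : ∀ p, (G (single p p 1)).PosSemidef) (hcu : CondUnital G) (hsc : SemiCausal G) :
    IsCondDoublyStochastic (classicalPart G) := by
  choose τ hτ hrow using hcu.exists_sum_map_single_apply hlin
  -- semi-causality makes the column sums independent of `x`; averaging over `x` they are `τ`
  have hcol : ∀ y y' x, ∑ x', G (single (x, y) (x, y) 1) (x', y') (x', y') = τ y y' y' := by
    intro y y' x
    have hm : (m : ℂ) ≠ 0 := by exact_mod_cast x.pos.ne'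
    refine mul_left_cancel₀ hm ?_
    calc (m : ℂ) * ∑ x', G (single (x, y) (x, y) 1) (x', y') (x', y')
        = ∑ x₀, ∑ x', G (single (x₀, y) (x₀, y) 1) (x', y') (x', y') := by
          simp [hsc.sum_map_single_apply_eq _ x]
      _ = (m : ℂ) * τ y y' y' := by rw [Finset.sum_comm]; simp [hrow]
  refine ⟨fun p' p => (Complex.nonneg_iff.mp (hpos p).diag_nonneg).1, fun y y' => (τ y y' y').re,
    fun y y' => (Complex.nonneg_iff.mp (hτ y).1.diag_nonneg).1, fun y => ?_,
    fun y y' => ⟨fun x => ?_, fun x' => ?_⟩⟩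
  · rw [← Complex.re_sum]
    exact congrArg Complex.re (hτ y).2
  · simp only [classicalPart, ← Complex.re_sum, hcol]
  · simp only [classicalPart, ← Complex.re_sum, hrow]

end ClassicalPart

theorem condMaj_iff_cds_of_classical_general {m n n' : ℕ}
    (ρ : Matrix (Fin m × Fin n) (Fin m × Fin n) ℂ)
    (σ : Matrix (Fin m × Fin n') (Fin m × Fin n') ℂ)
    (hρdiag : ∀ p q, p ≠ q → ρ p q = 0) (hσdiag : ∀ p q, p ≠ q → σ p q = 0) :
    CondMaj ρ σ ↔
      ∃ (k : ℕ) (D : Fin k → Matrix (Fin m) (Fin m) ℝ)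
        (F : Fin k → (Matrix (Fin n) (Fin n) ℂ → Matrix (Fin n') (Fin n') ℂ)),
        (∀ j, IsDoublyStochastic (D j)) ∧
        (∀ j, IsLinearMap ℂ (F j)) ∧
        (∀ j, (choiMatrix (F j)).PosSemidef) ∧
        (∀ X : Matrix (Fin n) (Fin n) ℂ, (∑ j, F j X).trace = X.trace) ∧
        σ = ∑ j, tensorMap (dsChannel (D j)) (F j) ρ := by
  constructor
  · intro h
    obtain ⟨W, N, hW, ⟨⟨hlin, -, hchoi⟩, hcu, hsc⟩, rfl⟩ := h.exists_conj_eq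
    have hGlin := hlin.conj (W ⊗ₖ (1 : Matrix (Fin n') (Fin n') ℂ))
    have hGpos : ∀ p, ((W ⊗ₖ 1) * N (single p p 1) * (W ⊗ₖ 1)ᴴ).PosSemidef := fun p =>
      (posSemidef_map_of_choi hlin hchoi (isState_single p).1).mul_mul_conjTranspose_same _
    obtain ⟨k, D, F, hD, hF, hFchoi, hFtr, hcds⟩ := (isCondDoublyStochastic_classicalPart
      hGlin hGpos (hcu.conj hW) (hsc.conj hW)).exists_cdsMap_eq
    have hσ := map_eq_diagonal_classicalPart hGlin (fun p => (hGpos p).1) hρdiag hσdiag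
    exact ⟨k, D, F, hD, hF, hFchoi, hFtr, hσ.trans (hcds ρ).symm⟩
  · rintro ⟨k, D, F, hD, hF, hFchoi, hFtr, rfl⟩
    exact condMaj_cdsMap hD hF hFchoi hFtr ρ

/-- For classical (diagonal) bipartite states, quantum conditional majorization with
respect to the first system is equivalent to the existence of a conditionally doubly
stochastic channel mapping one state to the other. -/
theorem condMaj_iff_cds_of_classical {m n n' : ℕ}
    (ρ : Matrix (Fin m × Fin n) (Fin m × Fin n) ℂ)
    (σ : Matrix (Fin m × Fin n') (Fin m × Fin n') ℂ)
    (hρ : IsState ρ) (hσ : IsState σ)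
    (hρdiag : ∀ p q, p ≠ q → ρ p q = 0) (hσdiag : ∀ p q, p ≠ q → σ p q = 0) :
    CondMaj ρ σ ↔
      ∃ (k : ℕ) (D : Fin k → Matrix (Fin m) (Fin m) ℝ)
        (F : Fin k → (Matrix (Fin n) (Fin n) ℂ → Matrix (Fin n') (Fin n') ℂ)),
        (∀ j, IsDoublyStochastic (D j)) ∧
        (∀ j, IsLinearMap ℂ (F j)) ∧
        (∀ j, (choiMatrix (F j)).PosSemidef) ∧
        (∀ X : Matrix (Fin n) (Fin n) ℂ, (∑ j, F j X).trace = X.trace) ∧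
        σ = ∑ j, tensorMap (dsChannel (D j)) (F j) ρ :=
  condMaj_iff_cds_of_classical_general ρ σ hρdiag hσdiag
end
end

section
/- Let 𝐇 be an entropy. Then 𝐇(vv†) = 0 for every pure state, i.e., for every unit vector v ∈ ℂ^n and every n ≥ 1, where vv† denotes the rank-one projection onto v. -/
open Matrix Kronecker BigOperators
open scoped ENNReal ComplexOrder

noncomputable section

/-!
A pure state `v v†` is the image `V 1 V†` of the one-dimensional state `1` under the isometry
`V = v`. Isometric embeddings give majorization in both directions (with the identity as unital
channel), so every entropy takes the same value on `v v†` and on `1`; additivity applied to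
`1 ⊗ 1 = 1` forces that value to be `0`.
-/

lemma card_le_of_conjTranspose_mul_self_eq_one {m n : Type} [Fintype m] [Fintype n]
    [DecidableEq n] {V : Matrix m n ℂ} (hV : Vᴴ * V = 1) :
    Fintype.card n ≤ Fintype.card m := by
  calc Fintype.card n = (1 : Matrix n n ℂ).rank := rank_one.symm
    _ = (Vᴴ * V).rank := by rw [hV]
    _ ≤ V.rank := rank_mul_le_right _ _
    _ ≤ Fintype.card m := rank_le_card_height V

lemma IsState.isometry_conj {m n : Type} [Fintype m] [Fintype n] [DecidableEq n]
    {ρ : Matrix n n ℂ} (hρ : IsState ρ) {V : Matrix m n ℂ} (hV : Vᴴ * V = 1) :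
    IsState (V * ρ * Vᴴ) :=
  ⟨hρ.1.mul_mul_conjTranspose_same V, by rw [trace_mul_cycle, hV, one_mul, hρ.2]⟩

lemma choiMatrix_id (α : Type) [Fintype α] [DecidableEq α] :
    choiMatrix (id : Matrix α α ℂ → Matrix α α ℂ) =
      vecMulVec (fun p : α × α => if p.1 = p.2 then 1 else 0)
        (star fun p : α × α => if p.1 = p.2 then 1 else 0) := by
  ext ⟨p₁, p₂⟩ ⟨q₁, q₂⟩
  simp [choiMatrix, Matrix.sum_apply, kroneckerMap_apply, single, vecMulVec_apply, ite_and,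
    Finset.sum_ite_eq, apply_ite, eq_comm]
  split_ifs <;> tauto

lemma isChannel_id (α : Type) [Fintype α] [DecidableEq α] :
    IsChannel (id : Matrix α α ℂ → Matrix α α ℂ) :=
  ⟨⟨fun _ _ => rfl, fun _ _ => rfl⟩, fun _ => rfl,
    by rw [choiMatrix_id]; exact posSemidef_vecMulVec_self_star _⟩

section Isometry

variable {n n' : ℕ} {V : Matrix (Fin n') (Fin n) ℂ}

lemma maj_isometry_conj (hV : Vᴴ * V = 1) (ρ : Matrix (Fin n) (Fin n) ℂ) :
    Maj ρ (V * ρ * Vᴴ) := by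
  have hn : n ≤ n' := by simpa using card_le_of_conjTranspose_mul_self_eq_one hV
  exact Or.inl ⟨hn, V, id, hV, isChannel_id _, rfl, rfl⟩

lemma isometry_conj_maj (hV : Vᴴ * V = 1) (ρ : Matrix (Fin n) (Fin n) ℂ) :
    Maj (V * ρ * Vᴴ) ρ := by
  have hn : n ≤ n' := by simpa using card_le_of_conjTranspose_mul_self_eq_one hV
  exact Or.inr ⟨hn, V, id, hV, isChannel_id _, rfl, rfl⟩

theorem Entropy.H_isometry_conj (E : Entropy) (hV : Vᴴ * V = 1)
    {ρ : Matrix (Fin n) (Fin n) ℂ} (hρ : IsState ρ) :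
    E.H n' (V * ρ * Vᴴ) = E.H n ρ :=
  le_antisymm (E.mono _ _ _ _ (hρ.isometry_conj hV) hρ (isometry_conj_maj hV ρ))
    (E.mono _ _ _ _ hρ (hρ.isometry_conj hV) (maj_isometry_conj hV ρ))

end Isometry

lemma isState_one_fin_one : IsState (1 : Matrix (Fin 1) (Fin 1) ℂ) :=
  ⟨PosSemidef.one, by simp⟩

theorem Entropy.H_one_fin_one (E : Entropy) : E.H 1 (1 : Matrix (Fin 1) (Fin 1) ℂ) = 0 := by
  have h := E.additive 1 1 1 1 isState_one_fin_one isState_one_fin_one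
  have h11 : mreindex ((1 : Matrix (Fin 1) (Fin 1) ℂ) ⊗ₖ (1 : Matrix (Fin 1) (Fin 1) ℂ)) = 1 := by
    rw [one_kronecker_one]
    simp [mreindex]
  rw [h11] at h
  linarith

/-- Every entropy vanishes on every pure state. -/
theorem entropy_pure_eq_zero (E : Entropy) (n : ℕ) (v : Fin n → ℂ)
    (hv : star v ⬝ᵥ v = 1) :
    E.H n (Matrix.vecMulVec v (star v)) = 0 := by
  set V := replicateCol (Fin 1) v
  have hV : Vᴴ * V = 1 := by
    ext i j
    fin_cases i; fin_cases j
    simp [V, conjTranspose_replicateCol, replicateRow_mul_replicateCol_apply, hv]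
  have hpure : vecMulVec v (star v) = V * (1 : Matrix (Fin 1) (Fin 1) ℂ) * Vᴴ := by
    rw [Matrix.mul_one, conjTranspose_replicateCol, vecMulVec_eq (Fin 1)]; rfl
  rw [hpure, E.H_isometry_conj hV isState_one_fin_one, E.H_one_fin_one]
end
end
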